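/- arXiv:2602.18210 — 4 statements merged into one kernel-verified Lean document; each statement's English description precedes it below -/
import Mathlib

section
/- If p : [0,∞) → ℝ satisfies the Volterra convolution equation ∫₀ˣ p(x−y)k(y)dy = x for all x ≥ 0, where k is a probability density on [0,∞), and if Z is a random variable with density g₀(z) = ∫₀^∞ k(z−x) dF₀(x) for a distribution function F₀ on [0,∞), then E[p(x−Z)·1{Z < x}] = ∫₀ˣ F₀(s) ds for every x > 0. -/
open MeasureTheory
open scoped ENNReal

/-- If `p` satisfies the Volterra convolution equation
`∫₀ˣ p(x-y) k(y) dy = x` for all `x ≥ 0`, with `k` a probability density on `[0,∞)`,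
and `Z` has density `g₀(z) = ∫ k(z-x) dF₀(x)` where `F₀` is the CDF of the measure `μF`
supported on `[0,∞)`, then `E[p(x-Z)·1{Z < x}] = ∫₀ˣ F₀(s) ds` for every `x > 0`. -/
theorem stmt0
    (k p : ℝ → ℝ) (μF : Measure ℝ) [IsProbabilityMeasure μF]
    (hsupp : μF (Set.Iio 0) = 0)
    (hk0 : ∀ x : ℝ, x < 0 → k x = 0) (hp0 : ∀ x : ℝ, x < 0 → p x = 0)
    (hk_nonneg : ∀ x, 0 ≤ k x) (hk_norm : ∫ x, k x = 1)
    (hk_meas : Measurable k) (hp_meas : Measurable p)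
    (g₀ : ℝ → ℝ) (hg : ∀ z, g₀ z = ∫ x, k (z - x) ∂μF)
    (hVolterra : ∀ x : ℝ, 0 ≤ x → ∫ y in (0:ℝ)..x, p (x - y) * k y = x)
    (hp_loc_int : ∀ T > (0:ℝ), IntegrableOn p (Set.Icc 0 T))
    (hint : ∀ x > (0:ℝ), IntegrableOn (fun z => p (x - z) * g₀ z) (Set.Ico 0 x)) :
    ∀ x > (0:ℝ),
      ∫ z in Set.Ico (0:ℝ) x, p (x - z) * g₀ z =
        ∫ s in (0:ℝ)..x, (μF (Set.Iic s)).toReal := by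
  intro x hx
  set ν : Measure ℝ := volume.restrict (Set.Ico 0 x) with hνdef
  -- k is integrable
  have hk_int : Integrable k := by
    by_contra h
    rw [integral_undef h] at hk_norm; norm_num at hk_norm
  have hk_lint : ∫⁻ y, ENNReal.ofReal (k y) = 1 := by
    rw [← ofReal_integral_eq_lintegral_ofReal hk_int
      (Filter.Eventually.of_forall hk_nonneg), hk_norm, ENNReal.ofReal_one]
  -- the lintegral version of g₀
  set I : ℝ → ℝ≥0∞ := fun z => ∫⁻ u, ENNReal.ofReal (k (z - u)) ∂μF with hIdef
  have hkz_meas : Measurable (fun q : ℝ × ℝ => ENNReal.ofReal (k (q.1 - q.2))) :=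
    (hk_meas.comp (measurable_fst.sub measurable_snd)).ennreal_ofReal
  have hI_meas : Measurable I := hkz_meas.lintegral_prod_right'
  have hI_lint : ∫⁻ z, I z = 1 := by
    rw [hIdef]
    rw [lintegral_lintegral_swap hkz_meas.aemeasurable]
    have : ∀ u : ℝ, ∫⁻ z, ENNReal.ofReal (k (z - u)) = 1 := fun u => by
      rw [lintegral_sub_right_eq_self (fun z => ENNReal.ofReal (k z)) u, hk_lint]
    simp only [this, lintegral_one, measure_univ, mul_one]
  have hI_ae : ∀ᵐ z, I z < ⊤ := ae_lt_top hI_meas (by rw [hI_lint]; exact ENNReal.one_ne_top)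
  have hg0 : ∀ z, g₀ z = (I z).toReal := fun z => by
    have hm : AEStronglyMeasurable (fun u : ℝ => k (z - u)) μF :=
      (hk_meas.comp (measurable_const.sub measurable_id)).aestronglyMeasurable
    rw [hg, integral_eq_lintegral_of_nonneg_ae
      (Filter.Eventually.of_forall fun u => hk_nonneg _) hm]
  have hg0_nonneg : ∀ z, 0 ≤ g₀ z := fun z => by rw [hg0]; exact ENNReal.toReal_nonneg
  have hae : ∀ᵐ z, ENNReal.ofReal (g₀ z) = I z := by
    filter_upwards [hI_ae] with z hz
    rw [hg0 z, ENNReal.ofReal_toReal hz.ne]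
  -- joint integrability
  have hF_meas : Measurable (Function.uncurry fun z u => p (x - z) * k (z - u)) := by
    apply Measurable.mul
    · exact hp_meas.comp (measurable_const.sub measurable_fst)
    · exact hk_meas.comp (measurable_fst.sub measurable_snd)
  have hFint : Integrable (Function.uncurry fun z u => p (x - z) * k (z - u)) (ν.prod μF) := by
    refine ⟨hF_meas.aestronglyMeasurable, ?_⟩
    rw [HasFiniteIntegral, lintegral_prod _ (hF_meas.enorm.aemeasurable)]; simp only [enorm_eq_nnnorm]
    have key : ∀ᵐ z ∂ν,
        (∫⁻ u, (‖(Function.uncurry fun z u => p (x - z) * k (z - u)) (z, u)‖₊ : ℝ≥0∞) ∂μF)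
          = (‖p (x - z) * g₀ z‖₊ : ℝ≥0∞) := by
      refine ae_restrict_of_ae ?_
      filter_upwards [hae] with z hz
      have h1 : ∀ u : ℝ,
          (‖(Function.uncurry fun z u => p (x - z) * k (z - u)) (z, u)‖₊ : ℝ≥0∞)
            = (‖p (x - z)‖₊ : ℝ≥0∞) * ENNReal.ofReal (k (z - u)) := fun u => by
        simp only [Function.uncurry, nnnorm_mul, ENNReal.coe_mul,
          ← enorm_eq_nnnorm (k (z - u)), Real.enorm_eq_ofReal (hk_nonneg (z - u))]
      simp only [h1]
      have hm2 : Measurable (fun u : ℝ => ENNReal.ofReal (k (z - u))) :=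
        (hk_meas.comp (measurable_const.sub measurable_id)).ennreal_ofReal
      rw [lintegral_const_mul _ hm2]
      have h2 : (∫⁻ a, ENNReal.ofReal (k (z - a)) ∂μF) = ENNReal.ofReal (g₀ z) := hz.symm
      rw [h2, nnnorm_mul, ENNReal.coe_mul, ← enorm_eq_nnnorm (g₀ z), Real.enorm_eq_ofReal (hg0_nonneg z)]
    rw [lintegral_congr_ae key]
    exact (hint x hx).2
  -- main computation of the inner integral
  have hinner : ∀ u : ℝ, 0 ≤ u →
      (∫ z in Set.Ico (0:ℝ) x, p (x - z) * k (z - u)) = max (x - u) 0 := by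
    intro u hu
    by_cases hux : u < x
    · have hset : Set.Ico (0:ℝ) x ∩ Set.Ici u = Set.Ico u x := by
        ext z
        simp only [Set.mem_inter_iff, Set.mem_Ico, Set.mem_Ici]
        constructor
        · rintro ⟨⟨_, h2⟩, h3⟩; exact ⟨h3, h2⟩
        · rintro ⟨h1, h2⟩; exact ⟨⟨hu.trans h1, h2⟩, h1⟩
      have hind : ∀ z : ℝ, p (x - z) * k (z - u)
          = Set.indicator (Set.Ici u) (fun z => p (x - z) * k (z - u)) z := by
        intro z
        rcases le_or_gt u z with h | h
        · exact (Set.indicator_of_mem (Set.mem_Ici.2 h)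
            (fun z => p (x - z) * k (z - u))).symm
        · rw [Set.indicator_of_notMem
            (fun hc => absurd (Set.mem_Ici.1 hc) (not_le.2 h)),
            hk0 _ (by linarith), mul_zero]
      calc ∫ z in Set.Ico (0:ℝ) x, p (x - z) * k (z - u)
          = ∫ z in Set.Ico (0:ℝ) x,
              Set.indicator (Set.Ici u) (fun z => p (x - z) * k (z - u)) z := by
            exact setIntegral_congr_fun measurableSet_Ico fun z _ => hind z
        _ = ∫ z in Set.Ico (0:ℝ) x ∩ Set.Ici u, p (x - z) * k (z - u) :=
            setIntegral_indicator measurableSet_Ici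
        _ = ∫ z in Set.Ico u x, p (x - z) * k (z - u) := by rw [hset]
        _ = ∫ z in Set.Ioc u x, p (x - z) * k (z - u) := by
            apply setIntegral_congr_set; exact MeasureTheory.Ico_ae_eq_Ioc
        _ = ∫ z in u..x, p (x - z) * k (z - u) := by
            rw [intervalIntegral.integral_of_le hux.le]
        _ = ∫ y in (0:ℝ)..(x - u), p (x - (y + u)) * k (y + u - u) := by
            rw [intervalIntegral.integral_comp_add_right
              (fun z => p (x - z) * k (z - u)) u]
            norm_num
        _ = ∫ y in (0:ℝ)..(x - u), p ((x - u) - y) * k y := by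
            congr 1; ext y; ring_nf
        _ = x - u := hVolterra (x - u) (by linarith)
        _ = max (x - u) 0 := (max_eq_left (by linarith)).symm
    · push_neg at hux
      have : ∀ z ∈ Set.Ico (0:ℝ) x, p (x - z) * k (z - u) = 0 := by
        intro z hz
        rw [hk0 _ (by simp only [Set.mem_Ico] at hz; linarith [hz.2]), mul_zero]
      rw [setIntegral_congr_fun measurableSet_Ico this, integral_zero,
        max_eq_right (by linarith)]
  have hae_u : ∀ᵐ u ∂μF, 0 ≤ u := by
    rw [ae_iff]
    convert hsupp using 2
    ext u; simp
  -- Fubini: main LHS computation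
  have hmain : (∫ z in Set.Ico (0:ℝ) x, p (x - z) * g₀ z) = ∫ u, max (x - u) 0 ∂μF := by
    calc ∫ z in Set.Ico (0:ℝ) x, p (x - z) * g₀ z
        = ∫ z, (∫ u, p (x - z) * k (z - u) ∂μF) ∂ν := by
          apply integral_congr_ae
          apply ae_restrict_of_ae
          apply Filter.Eventually.of_forall
          intro z
          show p (x - z) * g₀ z = ∫ u, p (x - z) * k (z - u) ∂μF
          rw [hg z, ← integral_const_mul]
      _ = ∫ u, (∫ z, p (x - z) * k (z - u) ∂ν) ∂μF := integral_integral_swap hFint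
      _ = ∫ u, max (x - u) 0 ∂μF := by
          apply integral_congr_ae
          filter_upwards [hae_u] with u hu
          exact hinner u hu
  rw [hmain]
  -- Step 5: ∫ max (x-u) 0 dμF = ∫₀ˣ F(s) ds
  set S : Set (ℝ × ℝ) := {q : ℝ × ℝ | q.2 ≤ q.1} with hSdef
  have hS : MeasurableSet S := measurableSet_le measurable_snd measurable_fst
  set ν' : Measure ℝ := volume.restrict (Set.Ioc 0 x) with hν'def
  have h1 : (ν'.prod μF) S = ∫⁻ s, μF (Set.Iic s) ∂ν' := by
    rw [Measure.prod_apply hS]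
    congr 1
  have h2 : (ν'.prod μF) S = ∫⁻ u, ν' (Set.Ici u) ∂μF := by
    rw [Measure.prod_apply_symm hS]
    congr 1
  have hmeasF : Measurable fun s => μF (Set.Iic s) :=
    Monotone.measurable fun a b hab => measure_mono (Set.Iic_subset_Iic.2 hab)
  have hRHS : (∫ s in (0:ℝ)..x, (μF (Set.Iic s)).toReal) = ((ν'.prod μF) S).toReal := by
    rw [intervalIntegral.integral_of_le hx.le, h1]
    rw [← integral_toReal (hmeasF.aemeasurable.restrict)
      (Filter.Eventually.of_forall fun s => measure_lt_top μF _)]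
  rw [hRHS]
  have hLHS : (∫ u, max (x - u) 0 ∂μF) = ((ν'.prod μF) S).toReal := by
    rw [h2, ← integral_toReal]
    · apply integral_congr_ae
      filter_upwards [hae_u] with u hu
      rw [hν'def, Measure.restrict_apply measurableSet_Ici]
      rcases eq_or_lt_of_le hu with h | h
      · rw [← h]
        have : Set.Ici (0:ℝ) ∩ Set.Ioc 0 x = Set.Ioc 0 x := by
          apply Set.inter_eq_self_of_subset_right
          exact fun z hz => le_of_lt hz.1
        rw [this, Real.volume_Ioc, ENNReal.toReal_ofReal (by linarith), sub_zero,
          max_eq_left hx.le]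
      · have : Set.Ici u ∩ Set.Ioc 0 x = Set.Icc u x := by
          ext z
          simp only [Set.mem_inter_iff, Set.mem_Ici, Set.mem_Ioc, Set.mem_Icc]
          constructor
          · rintro ⟨h1, _, h3⟩; exact ⟨h1, h3⟩
          · rintro ⟨h1, h2⟩; exact ⟨h1, lt_of_lt_of_le h h1, h2⟩
        rw [this, Real.volume_Icc]
        rcases le_total u x with h' | h'
        · rw [ENNReal.toReal_ofReal (by linarith), max_eq_left (by linarith)]
        · rw [ENNReal.ofReal_eq_zero.2 (by linarith), ENNReal.toReal_zero,
            max_eq_right (by linarith)]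
    · exact (measurable_measure_prodMk_right hS).aemeasurable
    · apply Filter.Eventually.of_forall
      intro u
      calc ν' (Set.Ici u) ≤ ν' Set.univ := measure_mono (Set.subset_univ _)
        _ = volume (Set.Ioc 0 x) := by rw [hν'def]; simp
        _ < ⊤ := by rw [Real.volume_Ioc]; exact ENNReal.ofReal_lt_top
  rw [hLHS]
end

section
/- Switch relation: let H : [0,T] → ℝ be continuous, let a ∈ (0,1), define T_H(a) := inf{t ∈ [0,T] : H(t) − a·t is minimal} and F̂(τ) := right derivative at τ of the greatest convex minorant of H on [0,T]. Then for every τ ∈ [0,T): T_H(a) ≤ τ if and only if F̂(τ) ≥ a. -/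
open MeasureTheory

/-- The greatest convex minorant of `h` on the set `s`. -/
noncomputable def gcm (s : Set ℝ) (h : ℝ → ℝ) (x : ℝ) : ℝ :=
  sSup {y : ℝ | ∃ f : ℝ → ℝ, ConvexOn ℝ s f ∧ (∀ z ∈ s, f z ≤ h z) ∧ y = f x}

section aux
variable {T : ℝ} {H : ℝ → ℝ}

lemma gcm_set_nonempty (hT : 0 ≤ T) (hH : ContinuousOn H (Set.Icc 0 T)) (x : ℝ) :
    {y : ℝ | ∃ f : ℝ → ℝ, ConvexOn ℝ (Set.Icc 0 T) f ∧ (∀ z ∈ Set.Icc 0 T, f z ≤ H z) ∧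
      y = f x}.Nonempty := by
  obtain ⟨x₀, hx₀, hmin⟩ := isCompact_Icc.exists_isMinOn ⟨0, le_refl (0:ℝ), hT⟩ hH
  exact ⟨H x₀, fun _ => H x₀, convexOn_const _ (convex_Icc 0 T), fun z hz => hmin hz, rfl⟩

lemma gcm_set_bddAbove (x : ℝ) (hx : x ∈ Set.Icc 0 T) :
    BddAbove {y : ℝ | ∃ f : ℝ → ℝ, ConvexOn ℝ (Set.Icc 0 T) f ∧ (∀ z ∈ Set.Icc 0 T, f z ≤ H z) ∧
      y = f x} := by
  refine ⟨H x, ?_⟩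
  rintro y ⟨f, hf, hfH, rfl⟩
  exact hfH x hx

lemma gcm_le (hT : 0 ≤ T) (hH : ContinuousOn H (Set.Icc 0 T)) {x : ℝ} (hx : x ∈ Set.Icc 0 T) :
    gcm (Set.Icc 0 T) H x ≤ H x := by
  refine csSup_le (gcm_set_nonempty hT hH x) ?_
  rintro y ⟨f, hf, hfH, rfl⟩
  exact hfH x hx

lemma le_gcm {f : ℝ → ℝ} (hf : ConvexOn ℝ (Set.Icc 0 T) f)
    (hfH : ∀ z ∈ Set.Icc 0 T, f z ≤ H z) {x : ℝ} (hx : x ∈ Set.Icc 0 T) :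
    f x ≤ gcm (Set.Icc 0 T) H x :=
  le_csSup (gcm_set_bddAbove x hx) ⟨f, hf, hfH, rfl⟩

lemma convexOn_gcm (hT : 0 ≤ T) (hH : ContinuousOn H (Set.Icc 0 T)) :
    ConvexOn ℝ (Set.Icc 0 T) (gcm (Set.Icc 0 T) H) := by
  refine ⟨convex_Icc 0 T, fun x hx y hy p q hp hq hpq => ?_⟩
  refine csSup_le (gcm_set_nonempty hT hH _) ?_
  rintro z ⟨f, hf, hfH, rfl⟩
  calc f (p • x + q • y) ≤ p • f x + q • f y := hf.2 hx hy hp hq hpq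
    _ ≤ p • gcm (Set.Icc 0 T) H x + q • gcm (Set.Icc 0 T) H y := by
        simp only [smul_eq_mul]
        gcongr <;> [exact le_gcm hf hfH hx; exact le_gcm hf hfH hy]

lemma convexOn_affine (b k : ℝ) : ConvexOn ℝ (Set.Icc 0 T) (fun t => b * t + k) := by
  refine ⟨convex_Icc 0 T, fun x _ y _ p q hp hq hpq => ?_⟩
  simp only [smul_eq_mul]
  have : b * (p * x + q * y) + k = p * (b * x + k) + q * (b * y + k) := by
    linear_combination k * hpq.symm
  linarith [this.le]

end aux

section claimA
variable {T : ℝ} {H : ℝ → ℝ}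

/-- If the gcm `g` grows with slope at least `d > a'` to the right of `τ`, then some
point `u ∈ [0,τ]` satisfies `H u - a' u ≤ g τ - a' τ`. -/
lemma claimA (hT : 0 < T) (hH : ContinuousOn H (Set.Icc 0 T)) {τ a' d : ℝ}
    (hτ : τ ∈ Set.Ico (0:ℝ) T) (ha' : 0 < a') (had : a' < d)
    (hgs : ∀ t ∈ Set.Ioc τ T,
      gcm (Set.Icc 0 T) H τ + d * (t - τ) ≤ gcm (Set.Icc 0 T) H t) :
    ∃ u ∈ Set.Icc 0 τ, H u - a' * u ≤ gcm (Set.Icc 0 T) H τ - a' * τ := by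
  set g := gcm (Set.Icc 0 T) H with hg
  by_contra hcon
  push_neg at hcon
  have hτ2 : τ ∈ Set.Icc (0:ℝ) T := ⟨hτ.1, hτ.2.le⟩
  have hsub : Set.Icc (0:ℝ) τ ⊆ Set.Icc 0 T := Set.Icc_subset_Icc le_rfl hτ.2.le
  have hc : ContinuousOn (fun u => H u - a' * u) (Set.Icc 0 τ) :=
    (hH.mono hsub).sub ((continuous_const.mul continuous_id).continuousOn)
  obtain ⟨u₀, hu₀, hu₀min⟩ := isCompact_Icc.exists_isMinOn ⟨τ, hτ.1, le_rfl⟩ hc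
  set ε := (H u₀ - a' * u₀) - (g τ - a' * τ) with hεdef
  have hεpos : 0 < ε := sub_pos.2 (hcon u₀ hu₀)
  have hlow : ∀ u ∈ Set.Icc 0 τ, g τ + a' * (u - τ) + ε ≤ H u := by
    intro u hu
    have h1 : H u₀ - a' * u₀ ≤ H u - a' * u := hu₀min hu
    simp only [hεdef]; nlinarith
  set b := (a' + d)/2 with hbdef
  have hbpos : 0 < b := by simp only [hbdef]; linarith
  have hab : a' < b := by simp only [hbdef]; linarith
  have hbd : b < d := by simp only [hbdef]; linarith
  have hHτ : g τ + ε ≤ H τ := by have := hlow τ ⟨hτ.1, le_rfl⟩; linarith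
  have hct : ContinuousWithinAt H (Set.Icc 0 T) τ := hH τ hτ2
  rw [Metric.continuousWithinAt_iff] at hct
  obtain ⟨δ₁, hδ₁pos, hδ₁⟩ := hct (ε/4) (by positivity)
  set δ := min δ₁ (ε/(4*b)) with hδdef
  have hδpos : 0 < δ := lt_min hδ₁pos (by positivity)
  set ε' := min (ε/4) ((d - b)*δ) with hε'def
  have hε'pos : 0 < ε' := lt_min (by positivity) (mul_pos (by linarith) hδpos)
  set M : ℝ → ℝ := fun t => b * t + (g τ + ε' - b * τ) with hMdef
  have hM : ∀ t ∈ Set.Icc 0 T, M t ≤ H t := by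
    intro t ht
    rcases le_or_gt t τ with h1 | h1
    · have h2 := hlow t ⟨ht.1, h1⟩
      have h3 : b * (t - τ) ≤ a' * (t - τ) := by nlinarith
      have h4 : ε' ≤ ε/4 := min_le_left _ _
      simp only [hMdef]; nlinarith
    · rcases lt_or_ge (t - τ) δ with h2 | h2
      · have hd1 : dist t τ < δ₁ := by
          rw [Real.dist_eq, abs_of_pos (by linarith)]
          exact lt_of_lt_of_le h2 (min_le_left _ _)
        have h3 : dist (H t) (H τ) < ε/4 := hδ₁ ht hd1
        rw [Real.dist_eq, abs_lt] at h3
        have h4 : b * (t - τ) ≤ b * δ := by nlinarith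
        have h5 : b * δ ≤ ε/4 := by
          have : δ ≤ ε/(4*b) := min_le_right _ _
          rw [le_div_iff₀ (by positivity)] at this
          nlinarith
        have h6 : ε' ≤ ε/4 := min_le_left _ _
        simp only [hMdef]; nlinarith
      · have h3 := hgs t ⟨h1, ht.2⟩
        have h4 : g t ≤ H t := gcm_le hT.le hH ht
        have h5 : ε' ≤ (d - b)*δ := min_le_right _ _
        have h6 : (d - b)*δ ≤ (d - b)*(t - τ) := by nlinarith
        simp only [hMdef]; nlinarith
  have hconvM : ConvexOn ℝ (Set.Icc 0 T) M := convexOn_affine b _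
  have hmem : g τ + ε' ∈ {y : ℝ | ∃ f : ℝ → ℝ, ConvexOn ℝ (Set.Icc 0 T) f ∧
      (∀ z ∈ Set.Icc 0 T, f z ≤ H z) ∧ y = f τ} :=
    ⟨M, hconvM, hM, by simp only [hMdef]; ring⟩
  have : g τ + ε' ≤ g τ := le_csSup (gcm_set_bddAbove τ hτ2) hmem
  linarith

end claimA

/-- Switch relation: for `H : [0,T] → ℝ` continuous, `a ∈ (0,1)`,
`T_H(a) := inf{t ∈ [0,T] : H(t) - a t is minimal}` and `F̂(τ)` the right derivative of
the greatest convex minorant of `H` on `[0,T]`, one has for every `τ ∈ [0,T)`: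
`T_H(a) ≤ τ ↔ F̂(τ) ≥ a`. -/
theorem stmt3
    (T : ℝ) (hT : 0 < T) (H : ℝ → ℝ) (hH : ContinuousOn H (Set.Icc 0 T))
    (a : ℝ) (ha : a ∈ Set.Ioo (0:ℝ) 1) :
    ∀ τ ∈ Set.Ico (0:ℝ) T,
      (sInf {t : ℝ | t ∈ Set.Icc (0:ℝ) T ∧
          ∀ s ∈ Set.Icc (0:ℝ) T, H t - a * t ≤ H s - a * s} ≤ τ
        ↔ a ≤ derivWithin (gcm (Set.Icc 0 T) H) (Set.Ioi τ) τ) := by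
  intro τ hτ
  set g := gcm (Set.Icc 0 T) H with hgdef
  set S := {t : ℝ | t ∈ Set.Icc (0:ℝ) T ∧
      ∀ s ∈ Set.Icc (0:ℝ) T, H t - a * t ≤ H s - a * s} with hSdef
  have hτ0 : (0:ℝ) ≤ τ := hτ.1
  have hτT : τ < T := hτ.2
  have hτ2 : τ ∈ Set.Icc (0:ℝ) T := ⟨hτ0, hτT.le⟩
  have hconv : ConvexOn ℝ (Set.Icc 0 T) g := convexOn_gcm hT.le hH
  have hIoi : Set.Ioi τ \ {τ} = Set.Ioi τ :=
    Set.diff_singleton_eq_self (by simp)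
  have hφc : ContinuousOn (fun t => H t - a * t) (Set.Icc 0 T) :=
    hH.sub ((continuous_const.mul continuous_id).continuousOn)
  obtain ⟨m₀, hm₀, hm₀min⟩ :=
    isCompact_Icc.exists_isMinOn ⟨0, le_refl (0:ℝ), hT.le⟩ hφc
  have hSne : S.Nonempty := ⟨m₀, hm₀, fun s hs => hm₀min hs⟩
  have hSbdd : BddBelow S := ⟨0, fun t ht => ht.1.1⟩
  have hSclosed : IsClosed S := by
    have hSeq : S = Set.Icc (0:ℝ) T ∩
        (fun t => H t - a * t) ⁻¹' Set.Iic (H m₀ - a * m₀) := by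
      ext t
      constructor
      · rintro ⟨ht1, ht2⟩; exact ⟨ht1, ht2 m₀ hm₀⟩
      · rintro ⟨ht1, ht2⟩; exact ⟨ht1, fun s hs => le_trans ht2 (hm₀min hs)⟩
    rw [hSeq]
    exact hφc.preimage_isClosed_of_isClosed isClosed_Icc isClosed_Iic
  constructor
  · -- forward: sInf S ≤ τ → a ≤ right derivative
    intro hinf
    have hmS : sInf S ∈ S := hSclosed.csInf_mem hSne hSbdd
    set m := sInf S with hmdef
    have hmτ : m ≤ τ := hinf
    have hmIcc : m ∈ Set.Icc (0:ℝ) T := hmS.1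
    have hmmin : ∀ s ∈ Set.Icc (0:ℝ) T, H m - a * m ≤ H s - a * s := hmS.2
    set ℓ : ℝ → ℝ := fun t => a * t + (H m - a * m) with hℓdef
    have hℓH : ∀ z ∈ Set.Icc (0:ℝ) T, ℓ z ≤ H z := by
      intro z hz; have := hmmin z hz; simp only [hℓdef]; linarith
    have hℓg : ∀ z ∈ Set.Icc (0:ℝ) T, ℓ z ≤ g z := fun z hz =>
      le_gcm (convexOn_affine a _) hℓH hz
    have hgm : g m = H m := by
      have h1 : g m ≤ H m := gcm_le hT.le hH hmIcc
      have h2 := hℓg m hmIcc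
      simp only [hℓdef] at h2
      linarith
    have hkey : ∀ y ∈ Set.Icc (0:ℝ) T, a * (y - m) ≤ g y - g m := by
      intro y hy
      have := hℓg y hy
      simp only [hℓdef] at this
      rw [hgm]; linarith
    have hslope : ∀ t ∈ Set.Ioo τ T, a ≤ slope g τ t := by
      intro t ht
      have htIcc : t ∈ Set.Icc (0:ℝ) T := ⟨le_trans hτ0 ht.1.le, ht.2.le⟩
      rw [slope_def_field]
      rcases eq_or_lt_of_le hmτ with heq | hlt
      · rw [le_div_iff₀ (by linarith [ht.1] : (0:ℝ) < t - τ)]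
        have := hkey t htIcc
        rw [heq] at this
        linarith
      · have hmt : m < t := lt_trans hlt ht.1
        have h1 := hconv.secant_mono htIcc hmIcc hτ2
          (ne_of_lt hmt) (ne_of_lt ht.1) hmτ
        have h2 : (g m - g t)/(m - t) = (g t - g m)/(t - m) := by
          rw [show g m - g t = -(g t - g m) by ring,
            show m - t = -(t - m) by ring, neg_div_neg_eq]
        have h3 : (g τ - g t)/(τ - t) = (g t - g τ)/(t - τ) := by
          rw [show g τ - g t = -(g t - g τ) by ring,
            show τ - t = -(t - τ) by ring, neg_div_neg_eq]
        rw [h2, h3] at h1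
        refine le_trans ?_ h1
        rw [le_div_iff₀ (by linarith : (0:ℝ) < t - m)]
        have := hkey t htIcc
        linarith
    have hmono : ∀ t₁ ∈ Set.Ioo τ T, ∀ t₂ ∈ Set.Ioo τ T, t₁ ≤ t₂ →
        slope g τ t₁ ≤ slope g τ t₂ := by
      intro t₁ ht₁ t₂ ht₂ h12
      rw [slope_def_field, slope_def_field]
      exact hconv.secant_mono hτ2 ⟨le_trans hτ0 ht₁.1.le, ht₁.2.le⟩
        ⟨le_trans hτ0 ht₂.1.le, ht₂.2.le⟩ (ne_of_gt ht₁.1) (ne_of_gt ht₂.1) h12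
    have hIne : (slope g τ '' Set.Ioo τ T).Nonempty :=
      ⟨_, ⟨(τ+T)/2, ⟨by linarith, by linarith⟩, rfl⟩⟩
    have hIbdd : BddBelow (slope g τ '' Set.Ioo τ T) := by
      refine ⟨a, ?_⟩; rintro y ⟨t, ht, rfl⟩; exact hslope t ht
    set c' := sInf (slope g τ '' Set.Ioo τ T) with hc'def
    have hac : a ≤ c' := le_csInf hIne (by rintro y ⟨t, ht, rfl⟩; exact hslope t ht)
    have htend : Filter.Tendsto (slope g τ) (nhdsWithin τ (Set.Ioi τ \ {τ})) (nhds c') := by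
      rw [hIoi, Metric.tendsto_nhdsWithin_nhds]
      intro ε hε
      obtain ⟨y, ⟨t₀, ht₀, rfl⟩, hy⟩ := exists_lt_of_csInf_lt hIne
        (by linarith : c' < c' + ε)
      refine ⟨t₀ - τ, by linarith [ht₀.1], ?_⟩
      intro x hx hdx
      rw [Real.dist_eq] at hdx
      have hxτ : τ < x := hx
      have hxt₀ : x < t₀ := by
        rw [abs_of_pos (by linarith)] at hdx; linarith
      have hxI : x ∈ Set.Ioo τ T := ⟨hxτ, lt_trans hxt₀ ht₀.2⟩
      have hge : c' ≤ slope g τ x := csInf_le hIbdd ⟨x, hxI, rfl⟩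
      have hle2 : slope g τ x ≤ slope g τ t₀ := hmono x hxI t₀ ht₀ hxt₀.le
      rw [Real.dist_eq, abs_lt]
      constructor <;> linarith
    have hderiv : HasDerivWithinAt g c' (Set.Ioi τ) τ :=
      hasDerivWithinAt_iff_tendsto_slope.mpr htend
    rw [hderiv.derivWithin (uniqueDiffWithinAt_Ioi τ)]
    exact hac
  · -- backward: a ≤ right derivative → sInf S ≤ τ
    intro hle
    set d := derivWithin g (Set.Ioi τ) τ with hddef
    have hdiff : DifferentiableWithinAt ℝ g (Set.Ioi τ) τ := by
      by_contra hnd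
      have hd0 : d = 0 := hddef.trans (derivWithin_zero_of_not_differentiableWithinAt hnd)
      rw [hd0] at hle
      linarith [ha.1]
    have htend2 := hasDerivWithinAt_iff_tendsto_slope.mp hdiff.hasDerivWithinAt
    rw [hIoi] at htend2
    have hgs : ∀ t ∈ Set.Ioc τ T, g τ + d * (t - τ) ≤ g t := by
      intro t ht
      have htIcc : t ∈ Set.Icc (0:ℝ) T := ⟨le_trans hτ0 ht.1.le, ht.2⟩
      have h1 : d ≤ slope g τ t := by
        refine le_of_tendsto htend2 ?_
        filter_upwards [Ioo_mem_nhdsGT ht.1] with u hu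
        rw [slope_def_field, slope_def_field]
        exact hconv.secant_mono hτ2 ⟨le_trans hτ0 hu.1.le, le_trans hu.2.le ht.2⟩
          htIcc (ne_of_gt hu.1) (ne_of_gt ht.1) hu.2.le
      rw [slope_def_field, le_div_iff₀ (by linarith [ht.1] : (0:ℝ) < t - τ)] at h1
      linarith
    obtain ⟨m', hm', hm'min⟩ := isCompact_Icc.exists_isMinOn ⟨τ, hτ0, le_rfl⟩
      ((hφc.mono (Set.Icc_subset_Icc le_rfl hτT.le)))
    have hkey2 : ∀ s ∈ Set.Icc (0:ℝ) T, τ < s → H m' - a * m' ≤ H s - a * s := by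
      intro s hs hτs
      refine le_of_forall_pos_le_add ?_
      intro ε hε
      set a' := a - min (a/2) (ε/(τ+1)) with ha'def
      have hminpos : 0 < min (a/2) (ε/(τ+1)) :=
        lt_min (by linarith [ha.1]) (by positivity)
      have hmin1 : min (a/2) (ε/(τ+1)) ≤ a/2 := min_le_left _ _
      have hmin2 : min (a/2) (ε/(τ+1)) ≤ ε/(τ+1) := min_le_right _ _
      have ha'pos : 0 < a' := by simp only [ha'def]; linarith [ha.1]
      have ha'lt : a' < a := by simp only [ha'def]; linarith
      obtain ⟨u, hu, hule⟩ := claimA hT hH hτ ha'pos (lt_of_lt_of_le ha'lt hle) hgs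
      have e1 : H m' - a * m' ≤ H u - a * u := hm'min hu
      have e2 : H u - a * u ≤ H u - a' * u := by nlinarith [hu.1]
      have e3 : g τ - a * τ ≤ g s - a * s := by
        have := hgs s ⟨hτs, hs.2⟩
        nlinarith
      have e4 : g s ≤ H s := gcm_le hT.le hH hs
      have e5 : (a - a') * τ ≤ ε := by
        have h7 : a - a' = min (a/2) (ε/(τ+1)) := by simp only [ha'def]; ring
        rw [h7]
        calc min (a/2) (ε/(τ+1)) * τ ≤ (ε/(τ+1)) * τ := by nlinarith
          _ ≤ ε := by
            rw [div_mul_eq_mul_div, div_le_iff₀ (by linarith : (0:ℝ) < τ + 1)]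
            nlinarith
      have e6 : g τ - a' * τ = (g τ - a * τ) + (a - a') * τ := by ring
      linarith
    have hm'S : m' ∈ S := by
      refine ⟨⟨hm'.1, le_trans hm'.2 hτT.le⟩, fun s hs => ?_⟩
      rcases le_or_gt s τ with h | h
      · exact hm'min ⟨hs.1, h⟩
      · exact hkey2 s hs h
    exact le_trans (csInf_le hSbdd hm'S) hm'.2
end

section
/- Let k be a right-continuous decreasing probability density on [0,∞) with 0 < k(0) < ∞, and define the distribution function J(x) := 1 − k(x)/k(0). If m is the renewal function satisfying m(x) = J(x) + ∫₀ˣ m(x−y) dJ(y), then p(x) := (1 + m(x))/k(0) solves the Volterra equation ∫₀ˣ p(x−y) k(y) dy = x for all x > 0. -/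
open MeasureTheory

/-- Renewal construction solves the Volterra equation: let `k` be a
right-continuous decreasing probability density on `[0,∞)` with `0 < k(0) < ∞`, let
`J(x) = 1 - k(x)/k(0)` (a distribution function with Stieltjes measure `μJ`), and let
`m` be the renewal function, i.e. `m(x) = J(x) + ∫₀ˣ m(x-y) dJ(y)`. Then
`p(x) := (1 + m(x))/k(0)` solves `∫₀ˣ p(x-y) k(y) dy = x` for all `x > 0`. -/
theorem stmt8
    (k J m p : ℝ → ℝ) (μJ : Measure ℝ) [IsProbabilityMeasure μJ]
    (hk_meas : Measurable k) (hm_meas : Measurable m)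
    (hk_anti : AntitoneOn k (Set.Ici 0)) (hk_rc : ∀ x : ℝ, 0 ≤ x →
      ContinuousWithinAt k (Set.Ici x) x)
    (hk_nonneg : ∀ x, 0 ≤ k x)
    (hk_dens : ∫ x in Set.Ioi (0:ℝ), k x = 1)
    (hk0 : 0 < k 0)
    (hJ : ∀ x, J x = 1 - k x / k 0)
    (hμJ_supp : μJ (Set.Iio 0) = 0)
    (hμJ : ∀ x : ℝ, 0 ≤ x → (μJ (Set.Iic x)).toReal = J x)
    (hm_bdd : ∀ T > (0:ℝ), ∃ M : ℝ, ∀ x ∈ Set.Icc (0:ℝ) T, |m x| ≤ M)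
    (hrenewal : ∀ x : ℝ, 0 ≤ x → m x = J x + ∫ y in Set.Icc (0:ℝ) x, m (x - y) ∂μJ)
    (hp : ∀ x, p x = (1 + m x) / k 0) :
    ∀ x > (0:ℝ), ∫ y in (0:ℝ)..x, p (x - y) * k y = x := by
  intro x hx
  have hxle : (0:ℝ) ≤ x := hx.le
  have hk0ne : k 0 ≠ 0 := ne_of_gt hk0
  obtain ⟨M, hMx⟩ := hm_bdd x hx
  have hM0 : 0 ≤ M := le_trans (abs_nonneg _) (hMx 0 ⟨le_rfl, hxle⟩)
  -- basic properties of J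
  have hJmeas : Measurable J := by
    have hfun : J = fun y => 1 - k y / k 0 := funext hJ
    rw [hfun]; exact measurable_const.sub (hk_meas.div_const _)
  have hJ01 : ∀ y : ℝ, 0 ≤ y → 0 ≤ J y ∧ J y ≤ 1 := by
    intro y hy
    have hky : k y ≤ k 0 := hk_anti (Set.mem_Ici.2 le_rfl) (Set.mem_Ici.2 hy) hy
    have h1 : k y / k 0 ≤ 1 := (div_le_one hk0).2 hky
    have h2 : 0 ≤ k y / k 0 := div_nonneg (hk_nonneg y) hk0.le
    rw [hJ]; constructor <;> linarith
  -- integrability helper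
  have intOn : ∀ (f : ℝ → ℝ) (C : ℝ), Measurable f →
      (∀ y ∈ Set.Ioc (0:ℝ) x, |f y| ≤ C) → IntegrableOn f (Set.Ioc 0 x) := by
    intro f C hf hC
    refine Measure.integrableOn_of_bounded (M := C) measure_Ioc_lt_top.ne
      hf.aestronglyMeasurable ?_
    filter_upwards [ae_restrict_mem measurableSet_Ioc] with y hy
    simpa [Real.norm_eq_abs] using hC y hy
  have int_m : IntegrableOn m (Set.Ioc 0 x) :=
    intOn m M hm_meas (fun y hy => hMx y ⟨hy.1.le, hy.2⟩)
  have int_J : IntegrableOn J (Set.Ioc 0 x) :=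
    intOn J 1 hJmeas (fun y hy => abs_le.2
      ⟨by linarith [(hJ01 y hy.1.le).1], (hJ01 y hy.1.le).2⟩)
  have hmeas_flip : Measurable (fun y : ℝ => m (x - y)) :=
    hm_meas.comp (measurable_const.sub measurable_id)
  have int_mflip : IntegrableOn (fun y => m (x - y)) (Set.Ioc 0 x) :=
    intOn _ M hmeas_flip
      (fun y hy => hMx (x - y) ⟨by linarith [hy.2], by linarith [hy.1]⟩)
  have int_mflipJ : IntegrableOn (fun y => m (x - y) * J y) (Set.Ioc 0 x) := by
    refine intOn _ M (hmeas_flip.mul hJmeas) (fun y hy => ?_)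
    have h1 := hMx (x - y) ⟨by linarith [hy.2], by linarith [hy.1]⟩
    have h2 := hJ01 y hy.1.le
    rw [abs_mul]
    calc |m (x - y)| * |J y| ≤ M * 1 :=
          mul_le_mul h1 (abs_le.2 ⟨by linarith, h2.2⟩) (abs_nonneg _) hM0
      _ = M := mul_one M
  have int_mJflip : IntegrableOn (fun s => m s * J (x - s)) (Set.Ioc 0 x) := by
    refine intOn _ M (hm_meas.mul (hJmeas.comp (measurable_const.sub measurable_id)))
      (fun y hy => ?_)
    have h1 := hMx y ⟨hy.1.le, hy.2⟩
    have h2 := hJ01 (x - y) (by linarith [hy.2])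
    rw [abs_mul]
    calc |m y| * |J (x - y)| ≤ M * 1 :=
          mul_le_mul h1 (abs_le.2 ⟨by linarith, h2.2⟩) (abs_nonneg _) hM0
      _ = M := mul_one M
  -- the kernel for the first Fubini
  set S : Set (ℝ × ℝ) := {q : ℝ × ℝ | 0 ≤ q.2 ∧ q.2 ≤ q.1} with hS
  have hSmeas : MeasurableSet S :=
    (measurableSet_le measurable_const measurable_snd).inter
      (measurableSet_le measurable_snd measurable_fst)
  set F : ℝ × ℝ → ℝ := S.indicator (fun q => m (q.1 - q.2)) with hF
  have hFmeas : Measurable F :=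
    (hm_meas.comp (measurable_fst.sub measurable_snd)).indicator hSmeas
  have hae1 : ∀ᵐ q ∂((volume.restrict (Set.Ioc 0 x)).prod μJ), q.1 ∈ Set.Ioc 0 x := by
    rw [Filter.eventually_iff, mem_ae_iff]
    have hset : {q : ℝ × ℝ | q.1 ∈ Set.Ioc 0 x}ᶜ = (Set.Ioc 0 x)ᶜ ×ˢ (Set.univ : Set ℝ) := by
      ext q; simp
    rw [hset, Measure.prod_prod, Measure.restrict_apply measurableSet_Ioc.compl]
    simp
  have hFint : Integrable F ((volume.restrict (Set.Ioc 0 x)).prod μJ) := by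
    refine ⟨hFmeas.aestronglyMeasurable, HasFiniteIntegral.of_bounded (C := M) ?_⟩
    filter_upwards [hae1] with q hq
    rw [Real.norm_eq_abs]
    by_cases hqS : q ∈ S
    · rw [hF, Set.indicator_of_mem hqS]
      exact hMx _ ⟨by linarith [hqS.1, hqS.2], by linarith [hqS.1, hq.2]⟩
    · rw [hF, Set.indicator_of_notMem hqS]; simpa using hM0
  -- step A : integrate the renewal equation
  have stepA : ∫ u in Set.Ioc (0:ℝ) x, (m u - J u)
      = ∫ u in Set.Ioc (0:ℝ) x, ∫ t, F (u, t) ∂μJ := by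
    refine setIntegral_congr_fun measurableSet_Ioc (fun u hu => ?_)
    have hu0 : (0:ℝ) ≤ u := hu.1.le
    have hind : (fun t => F (u, t)) = (Set.Icc (0:ℝ) u).indicator (fun t => m (u - t)) := by
      funext t
      by_cases ht : t ∈ Set.Icc (0:ℝ) u
      · rw [Set.indicator_of_mem ht, hF,
          Set.indicator_of_mem (show (u, t) ∈ S from ⟨ht.1, ht.2⟩)]
      · rw [Set.indicator_of_notMem ht, hF, Set.indicator_of_notMem]
        exact fun hmem => ht ⟨hmem.1, hmem.2⟩
    calc m u - J u = ∫ t in Set.Icc (0:ℝ) u, m (u - t) ∂μJ := by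
          rw [hrenewal u hu0]; ring
      _ = ∫ t, (Set.Icc (0:ℝ) u).indicator (fun t => m (u - t)) t ∂μJ :=
          (integral_indicator measurableSet_Icc).symm
      _ = ∫ t, F (u, t) ∂μJ := by rw [← hind]
  -- first Fubini swap
  have fub1 : ∫ u in Set.Ioc (0:ℝ) x, ∫ t, F (u, t) ∂μJ
      = ∫ t, (∫ u in Set.Ioc (0:ℝ) x, F (u, t)) ∂μJ :=
    integral_integral_swap (f := fun u t => F (u, t))
      (by exact hFint)
  -- the inner integral after the swap
  set Mfun : ℝ → ℝ := fun r => ∫ u in Set.Ioc (0:ℝ) r, m u with hMfun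
  have haeJ : ∀ᵐ t ∂μJ, 0 ≤ t := by
    rw [Filter.eventually_iff, mem_ae_iff]
    have : {t : ℝ | 0 ≤ t}ᶜ = Set.Iio 0 := by ext t; simp
    rw [this]; exact hμJ_supp
  have stepB : (∫ t, (∫ u in Set.Ioc (0:ℝ) x, F (u, t)) ∂μJ)
      = ∫ t in Set.Icc (0:ℝ) x, Mfun (x - t) ∂μJ := by
    rw [← integral_indicator measurableSet_Icc]
    refine integral_congr_ae ?_
    filter_upwards [haeJ] with t ht
    by_cases htx : t ≤ x
    · rw [Set.indicator_of_mem (Set.mem_Icc.2 ⟨ht, htx⟩)]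
      have h1 : ∀ u, F (u, t) = (Set.Ici t).indicator (fun u => m (u - t)) u := by
        intro u
        by_cases hu : t ≤ u
        · rw [Set.indicator_of_mem (Set.mem_Ici.2 hu), hF,
            Set.indicator_of_mem (show (u, t) ∈ S from ⟨ht, hu⟩)]
        · rw [Set.indicator_of_notMem (by simpa using hu), hF,
            Set.indicator_of_notMem (fun hmem => hu hmem.2)]
      simp_rw [h1]
      rw [setIntegral_indicator measurableSet_Ici]
      have hsets : ((Set.Ioc 0 x ∩ Set.Ici t : Set ℝ) : Set ℝ) =ᶠ[ae volume] Set.Ioc t x := by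
        refine MeasureTheory.ae_eq_set.2 ⟨?_, ?_⟩
        · refine measure_mono_null ?_ (measure_singleton t)
          rintro u ⟨⟨⟨hu1, hu2⟩, hu3⟩, hu4⟩
          simp only [Set.mem_Ioc, not_and] at hu4
          exact Set.mem_singleton_iff.2
            (le_antisymm (not_lt.1 (fun h => hu4 h hu2)) hu3)
        · have hempty : Set.Ioc t x \ (Set.Ioc 0 x ∩ Set.Ici t) = ∅ := by
            ext u
            simp only [Set.mem_diff, Set.mem_Ioc, Set.mem_inter_iff, Set.mem_Ici,
              Set.mem_empty_iff_false, iff_false]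
            intro h
            exact h.2 ⟨⟨lt_of_le_of_lt ht h.1.1, h.1.2⟩, h.1.1.le⟩
          rw [hempty]; exact measure_empty
      rw [setIntegral_congr_set hsets, ← intervalIntegral.integral_of_le htx,
        intervalIntegral.integral_comp_sub_right m t, sub_self,
        intervalIntegral.integral_of_le (by linarith : (0:ℝ) ≤ x - t)]
    · rw [Set.indicator_of_notMem (fun hmem => htx hmem.2)]
      have hzero : Set.EqOn (fun u => F (u, t)) (fun _ => (0:ℝ)) (Set.Ioc 0 x) := by
        intro u hu
        exact Set.indicator_of_notMem (fun hmem => htx (le_trans hmem.2 hu.2)) _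
      rw [setIntegral_congr_fun measurableSet_Ioc hzero, integral_zero]
  -- the kernel for the second Fubini
  set T2 : Set (ℝ × ℝ) := {q : ℝ × ℝ | q.1 + q.2 ≤ x} with hT2
  have hT2meas : MeasurableSet T2 :=
    measurableSet_le (measurable_fst.add measurable_snd) measurable_const
  set G : ℝ × ℝ → ℝ := T2.indicator (fun q => m q.2) with hG
  have hGmeas : Measurable G := (hm_meas.comp measurable_snd).indicator hT2meas
  have hae2 : ∀ᵐ q ∂((μJ.restrict (Set.Icc 0 x)).prod (volume.restrict (Set.Ioc 0 x))),
      q.2 ∈ Set.Ioc 0 x := by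
    rw [Filter.eventually_iff, mem_ae_iff]
    have hset : {q : ℝ × ℝ | q.2 ∈ Set.Ioc 0 x}ᶜ = (Set.univ : Set ℝ) ×ˢ (Set.Ioc 0 x)ᶜ := by
      ext q; simp
    rw [hset, Measure.prod_prod, Measure.restrict_apply measurableSet_Ioc.compl]
    simp
  have hGint : Integrable G ((μJ.restrict (Set.Icc 0 x)).prod (volume.restrict (Set.Ioc 0 x))) := by
    refine ⟨hGmeas.aestronglyMeasurable, HasFiniteIntegral.of_bounded (C := M) ?_⟩
    filter_upwards [hae2] with q hq
    rw [Real.norm_eq_abs]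
    by_cases hqT : q ∈ T2
    · rw [hG, Set.indicator_of_mem hqT]
      exact hMx _ ⟨hq.1.le, hq.2⟩
    · rw [hG, Set.indicator_of_notMem hqT]; simpa using hM0
  -- step C : rewrite the left side of the second Fubini
  have stepC : ∫ t in Set.Icc (0:ℝ) x, Mfun (x - t) ∂μJ
      = ∫ t in Set.Icc (0:ℝ) x, (∫ s in Set.Ioc (0:ℝ) x, G (t, s)) ∂μJ := by
    refine setIntegral_congr_fun measurableSet_Icc (fun t ht => ?_)
    have hind : ∀ s, G (t, s) = (Set.Iic (x - t)).indicator m s := by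
      intro s
      by_cases hs : s ≤ x - t
      · rw [Set.indicator_of_mem (Set.mem_Iic.2 hs), hG,
          Set.indicator_of_mem (show (t, s) ∈ T2 from by simp only [hT2, Set.mem_setOf_eq]; linarith)]
      · rw [Set.indicator_of_notMem (by simpa using hs), hG, Set.indicator_of_notMem]
        simp only [hT2, Set.mem_setOf_eq]; intro h; exact hs (by linarith)
    simp_rw [hind]
    rw [setIntegral_indicator measurableSet_Iic]
    have hseteq : Set.Ioc 0 x ∩ Set.Iic (x - t) = Set.Ioc 0 (x - t) := by
      ext s
      simp only [Set.mem_inter_iff, Set.mem_Ioc, Set.mem_Iic]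
      constructor
      · rintro ⟨⟨h1, h2⟩, h3⟩; exact ⟨h1, h3⟩
      · rintro ⟨h1, h2⟩; exact ⟨⟨h1, by linarith [ht.1]⟩, h2⟩
    rw [hseteq]
  -- second Fubini swap
  have fub2 : ∫ t in Set.Icc (0:ℝ) x, (∫ s in Set.Ioc (0:ℝ) x, G (t, s)) ∂μJ
      = ∫ s in Set.Ioc (0:ℝ) x, (∫ t in Set.Icc (0:ℝ) x, G (t, s) ∂μJ) :=
    integral_integral_swap (f := fun t s => G (t, s))
      (by exact hGint)
  -- step D : compute the inner integral of the second Fubini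
  have stepD : ∫ s in Set.Ioc (0:ℝ) x, (∫ t in Set.Icc (0:ℝ) x, G (t, s) ∂μJ)
      = ∫ s in Set.Ioc (0:ℝ) x, m s * J (x - s) := by
    refine setIntegral_congr_fun measurableSet_Ioc (fun s hs => ?_)
    have hind : ∀ t, G (t, s) = (Set.Iic (x - s)).indicator (fun _ => m s) t := by
      intro t
      by_cases ht : t ≤ x - s
      · rw [Set.indicator_of_mem (Set.mem_Iic.2 ht), hG,
          Set.indicator_of_mem (show (t, s) ∈ T2 from by simp only [hT2, Set.mem_setOf_eq]; linarith)]
      · rw [Set.indicator_of_notMem (by simpa using ht), hG, Set.indicator_of_notMem]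
        simp only [hT2, Set.mem_setOf_eq]; intro h; exact ht (by linarith)
    simp_rw [hind]
    rw [setIntegral_indicator measurableSet_Iic, setIntegral_const]
    have h1 : Set.Icc 0 x ∩ Set.Iic (x - s) = Set.Icc 0 (x - s) := by
      ext t
      simp only [Set.mem_inter_iff, Set.mem_Icc, Set.mem_Iic]
      constructor
      · rintro ⟨⟨h1, h2⟩, h3⟩; exact ⟨h1, h3⟩
      · rintro ⟨h1, h2⟩; exact ⟨⟨h1, by linarith [hs.1]⟩, h2⟩
    have h2 : μJ (Set.Icc (0:ℝ) (x - s)) = μJ (Set.Iic (x - s)) := by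
      have hdiff : Set.Iic (x - s) \ Set.Iio 0 = Set.Icc 0 (x - s) := by
        ext u
        simp only [Set.mem_diff, Set.mem_Iic, Set.mem_Iio, not_lt, Set.mem_Icc]
        tauto
      rw [← hdiff, measure_diff_null hμJ_supp]
    rw [h1, measureReal_def, h2, hμJ (x - s) (by linarith [hs.2]), smul_eq_mul, mul_comm]
  -- the key renewal identity
  have key : (∫ u in Set.Ioc (0:ℝ) x, m u) - ∫ u in Set.Ioc (0:ℝ) x, J u
      = ∫ s in Set.Ioc (0:ℝ) x, m s * J (x - s) := by
    rw [← integral_sub int_m int_J, stepA, fub1, stepB, stepC, fub2, stepD]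
  -- final computations
  have intc : IntegrableOn (fun _ : ℝ => (1:ℝ)) (Set.Ioc 0 x) :=
    integrableOn_const measure_Ioc_lt_top.ne
  have intA : IntegrableOn (fun y => 1 + m (x - y)) (Set.Ioc 0 x) := by
    refine intOn _ (1 + M) (measurable_const.add hmeas_flip) (fun y hy => ?_)
    have h1 := hMx (x - y) ⟨by linarith [hy.2], by linarith [hy.1]⟩
    calc |1 + m (x - y)| ≤ |1| + |m (x - y)| := abs_add_le _ _
      _ ≤ 1 + M := by rw [abs_one]; linarith
  have intB : IntegrableOn (fun y => 1 + m (x - y) - J y) (Set.Ioc 0 x) := by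
    refine intOn _ (1 + M + 1) ((measurable_const.add hmeas_flip).sub hJmeas)
      (fun y hy => ?_)
    have h1 := hMx (x - y) ⟨by linarith [hy.2], by linarith [hy.1]⟩
    have h2 := hJ01 y hy.1.le
    rw [abs_le] at h1 ⊢
    constructor <;> linarith
  have hpoint : Set.EqOn (fun y => p (x - y) * k y)
      (fun y => 1 + m (x - y) - J y - m (x - y) * J y) (Set.Ioc 0 x) := by
    intro y hy
    have hky : k y = k 0 * (1 - J y) := by rw [hJ y]; field_simp; ring
    simp only
    rw [hp, hky]
    field_simp
    ring
  have refl1 : ∫ y in Set.Ioc (0:ℝ) x, m (x - y) = ∫ u in Set.Ioc (0:ℝ) x, m u := by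
    rw [← intervalIntegral.integral_of_le hxle, ← intervalIntegral.integral_of_le hxle,
      intervalIntegral.integral_comp_sub_left m x, sub_self, sub_zero]
  have refl2 : ∫ y in Set.Ioc (0:ℝ) x, m (x - y) * J y
      = ∫ s in Set.Ioc (0:ℝ) x, m s * J (x - s) := by
    rw [← intervalIntegral.integral_of_le hxle, ← intervalIntegral.integral_of_le hxle]
    have hcomp := intervalIntegral.integral_comp_sub_left (a := (0:ℝ)) (b := x)
      (fun s => m s * J (x - s)) x
    simp only [sub_zero, sub_self] at hcomp
    rw [← hcomp]
    refine intervalIntegral.integral_congr (fun y _ => ?_)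
    simp [sub_sub_cancel]
  have hone : ∫ _ in Set.Ioc (0:ℝ) x, (1:ℝ) = x := by
    rw [setIntegral_const]
    simp [Real.volume_Ioc, hxle]
  rw [intervalIntegral.integral_of_le hxle, setIntegral_congr_fun measurableSet_Ioc hpoint,
    integral_sub intB int_mflipJ, integral_sub intA int_J, integral_add intc int_mflip,
    hone, refl1, refl2]
  linarith [key]
end

section
/- Suppose the density k can be written as k(x) = k(0)(1 + ∫₀ˣ l(u)du) on [0,T] for a bounded Borel measurable l : [0,T] → ℝ and k(0) > 0. Let q be the unique solution of the type-II Volterra equation q + l∗q = −l on [0,T]. Then p(x) := (1/k(0))(1 + ∫₀ˣ q(u)du) satisfies k∗p = 𝟙∗𝟙, i.e. ∫₀ˣ k(x−y)p(y)dy = x for all x ∈ [0,T]. -/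
open MeasureTheory intervalIntegral Set

lemma tri_swap (x : ℝ) (hx : 0 ≤ x) (F : ℝ → ℝ → ℝ)
    (hF : Measurable (Function.uncurry F))
    (C : ℝ) (hC : ∀ y t, |F y t| ≤ C) :
    (∫ y in (0:ℝ)..x, ∫ t in (0:ℝ)..y, F y t) =
      ∫ t in (0:ℝ)..x, ∫ y in t..x, F y t := by
  have hS : MeasurableSet {p : ℝ × ℝ | p.2 ≤ p.1} :=
    measurableSet_le measurable_snd measurable_fst
  set G : ℝ × ℝ → ℝ := ({p : ℝ × ℝ | p.2 ≤ p.1}).indicator (Function.uncurry F) with hGdef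
  have hGmeas : Measurable G := hF.indicator hS
  have hGbd : ∀ p, |G p| ≤ |C| := by
    intro p
    by_cases h : p ∈ {p : ℝ × ℝ | p.2 ≤ p.1}
    · rw [hGdef, indicator_of_mem h]
      exact le_trans (hC p.1 p.2) (le_abs_self C)
    · rw [hGdef, indicator_of_notMem h]; simp
  have hGint : Integrable (Function.uncurry (fun y t => G (y, t)))
      ((volume.restrict (Ioc (0:ℝ) x)).prod (volume.restrict (Ioc (0:ℝ) x))) := by
    refine ⟨hGmeas.aestronglyMeasurable, ?_⟩
    exact HasFiniteIntegral.of_bounded (C := |C|) (ae_of_all _ fun p => by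
      rw [Real.norm_eq_abs]; exact hGbd p)
  have key := integral_integral_swap hGint
  have hL : (∫ y in (0:ℝ)..x, ∫ t in (0:ℝ)..y, F y t)
      = ∫ y in Ioc (0:ℝ) x, ∫ t in Ioc (0:ℝ) x, G (y, t) := by
    rw [integral_of_le hx]
    refine setIntegral_congr_fun measurableSet_Ioc (fun y hy => ?_)
    rw [integral_of_le hy.1.le]
    have h1 : ∫ t in Ioc (0:ℝ) x, G (y, t)
        = ∫ t in Ioc (0:ℝ) x, (Ioc (0:ℝ) y).indicator (F y) t := by
      refine setIntegral_congr_fun measurableSet_Ioc (fun t ht => ?_)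
      by_cases h : t ≤ y
      · rw [hGdef, indicator_of_mem (by exact h : (y, t) ∈ {p : ℝ × ℝ | p.2 ≤ p.1}),
          indicator_of_mem (mem_Ioc.mpr ⟨ht.1, h⟩)]
        rfl
      · rw [hGdef, indicator_of_notMem (by exact h),
          indicator_of_notMem (fun hm => h (mem_Ioc.mp hm).2)]
    rw [h1, setIntegral_indicator measurableSet_Ioc, Ioc_inter_Ioc, max_self,
      min_eq_right hy.2]
  have hR : (∫ t in (0:ℝ)..x, ∫ y in t..x, F y t)
      = ∫ t in Ioc (0:ℝ) x, ∫ y in Ioc (0:ℝ) x, G (y, t) := by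
    rw [integral_of_le hx]
    refine setIntegral_congr_fun measurableSet_Ioc (fun t ht => ?_)
    rw [integral_of_le ht.2]
    have h1 : ∫ y in Ioc (0:ℝ) x, G (y, t)
        = ∫ y in Ioc (0:ℝ) x, (Ici t).indicator (fun y => F y t) y := by
      refine setIntegral_congr_fun measurableSet_Ioc (fun y hy => ?_)
      by_cases h : t ≤ y
      · rw [hGdef, indicator_of_mem (by exact h : (y, t) ∈ {p : ℝ × ℝ | p.2 ≤ p.1}),
          indicator_of_mem (by exact h)]
        rfl
      · rw [hGdef, indicator_of_notMem (by exact h), indicator_of_notMem (by exact h)]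
    have h2 : Ioc (0:ℝ) x ∩ Ici t = Icc t x := by
      ext y
      simp only [mem_inter_iff, mem_Ioc, mem_Ici, mem_Icc]
      exact ⟨fun ⟨⟨_, h2⟩, h3⟩ => ⟨h3, h2⟩,
        fun ⟨h1', h2⟩ => ⟨⟨lt_of_lt_of_le ht.1 h1', h2⟩, h1'⟩⟩
    rw [h1, setIntegral_indicator measurableSet_Ici, h2, integral_Icc_eq_integral_Ioc]
  rw [hL, hR]
  exact key


/-- if the density `k` can be written as `k(x) = k(0)(1 + ∫₀ˣ l(u)du)`
on `[0,T]` with `l` bounded Borel measurable and `k(0) > 0`, and `q` is the (unique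
bounded Borel) solution of the type-II Volterra equation `q + l∗q = -l` on `[0,T]`,
then `p(x) := (1/k(0))(1 + ∫₀ˣ q(u)du)` satisfies `∫₀ˣ k(x-y) p(y) dy = x` for all
`x ∈ [0,T]` (i.e. `k∗p = 𝟙∗𝟙`). -/
theorem stmt11
    (T k0 : ℝ) (hT : 0 < T) (hk0 : 0 < k0)
    (l q k p : ℝ → ℝ)
    (hl_meas : Measurable l) (hl_bdd : ∃ M : ℝ, ∀ x ∈ Set.Icc (0:ℝ) T, |l x| ≤ M)
    (hq_meas : Measurable q) (hq_bdd : ∃ M : ℝ, ∀ x ∈ Set.Icc (0:ℝ) T, |q x| ≤ M)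
    (hk : ∀ x ∈ Set.Icc (0:ℝ) T, k x = k0 * (1 + ∫ u in (0:ℝ)..x, l u))
    (hVolt2 : ∀ x ∈ Set.Icc (0:ℝ) T, q x + (∫ y in (0:ℝ)..x, l (x - y) * q y) = - l x)
    (hp : ∀ x ∈ Set.Icc (0:ℝ) T, p x = (1 / k0) * (1 + ∫ u in (0:ℝ)..x, q u)) :
    ∀ x ∈ Set.Icc (0:ℝ) T, ∫ y in (0:ℝ)..x, k (x - y) * p y = x := by
  obtain ⟨Ml, hMl⟩ := hl_bdd
  obtain ⟨Mq, hMq⟩ := hq_bdd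
  set l₁ : ℝ → ℝ := (Icc (0:ℝ) T).indicator l with hl₁def
  set q₁ : ℝ → ℝ := (Icc (0:ℝ) T).indicator q with hq₁def
  have hl₁m : Measurable l₁ := hl_meas.indicator measurableSet_Icc
  have hq₁m : Measurable q₁ := hq_meas.indicator measurableSet_Icc
  have hl₁bd : ∀ u, |l₁ u| ≤ |Ml| := by
    intro u
    by_cases h : u ∈ Icc (0:ℝ) T
    · rw [hl₁def, indicator_of_mem h]; exact (hMl u h).trans (le_abs_self _)
    · rw [hl₁def, indicator_of_notMem h]; simp
  have hq₁bd : ∀ u, |q₁ u| ≤ |Mq| := by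
    intro u
    by_cases h : u ∈ Icc (0:ℝ) T
    · rw [hq₁def, indicator_of_mem h]; exact (hMq u h).trans (le_abs_self _)
    · rw [hq₁def, indicator_of_notMem h]; simp
  have hfin : IsFiniteMeasure (volume.restrict (Icc (0:ℝ) T)) :=
    ⟨by rw [Measure.restrict_apply_univ]; exact measure_Icc_lt_top⟩
  have hl₁int : Integrable l₁ := by
    rw [hl₁def, integrable_indicator_iff measurableSet_Icc]
    exact ⟨hl_meas.aestronglyMeasurable, HasFiniteIntegral.of_bounded (C := |Ml|)
      ((ae_restrict_iff' measurableSet_Icc).mpr (ae_of_all _ fun u hu => by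
        simpa [Real.norm_eq_abs] using (hMl u hu).trans (le_abs_self _)))⟩
  have hq₁int : Integrable q₁ := by
    rw [hq₁def, integrable_indicator_iff measurableSet_Icc]
    exact ⟨hq_meas.aestronglyMeasurable, HasFiniteIntegral.of_bounded (C := |Mq|)
      ((ae_restrict_iff' measurableSet_Icc).mpr (ae_of_all _ fun u hu => by
        simpa [Real.norm_eq_abs] using (hMq u hu).trans (le_abs_self _)))⟩
  set L : ℝ → ℝ := fun u => ∫ t in (0:ℝ)..u, l₁ t with hLdef
  set Q : ℝ → ℝ := fun u => ∫ t in (0:ℝ)..u, q₁ t with hQdef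
  have hLcont : Continuous L :=
    continuous_primitive (fun a b => hl₁int.intervalIntegrable) 0
  have hQcont : Continuous Q :=
    continuous_primitive (fun a b => hq₁int.intervalIntegrable) 0
  set CL : ℝ := ∫ t, ‖l₁ t‖ with hCLdef
  have hLbd : ∀ u, |L u| ≤ CL := by
    intro u
    calc |L u| ≤ ∫ t in Set.uIoc (0:ℝ) u, ‖l₁ t‖ := by
          simpa [Real.norm_eq_abs] using norm_integral_le_integral_norm_uIoc (f := l₁)
            (a := (0:ℝ)) (b := u) (μ := volume)
      _ ≤ CL := setIntegral_le_integral hl₁int.norm (ae_of_all _ fun t => norm_nonneg _)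
  -- mult bound helper
  have hmul : ∀ a b c d : ℝ, |a| ≤ c → |b| ≤ d → |a * b| ≤ c * d := by
    intro a b c d h1 h2
    rw [abs_mul]
    exact mul_le_mul h1 h2 (abs_nonneg _) ((abs_nonneg a).trans h1)
  -- Volterra in terms of l₁ q₁
  have hql : ∀ s ∈ Icc (0:ℝ) T,
      q₁ s + l₁ s = - ∫ t in (0:ℝ)..s, l₁ (s - t) * q₁ t := by
    intro s hs
    have h1 : (∫ t in (0:ℝ)..s, l₁ (s - t) * q₁ t) = ∫ t in (0:ℝ)..s, l (s - t) * q t := by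
      refine integral_congr (fun t ht => ?_)
      rw [uIcc_of_le hs.1] at ht
      have ht1 : t ∈ Icc (0:ℝ) T := ⟨ht.1, ht.2.trans hs.2⟩
      have ht2 : s - t ∈ Icc (0:ℝ) T := ⟨by linarith [ht.2], by linarith [hs.2, ht.1]⟩
      rw [hl₁def, hq₁def, indicator_of_mem ht1, indicator_of_mem ht2]
    rw [hq₁def, hl₁def, indicator_of_mem hs, indicator_of_mem hs, h1]
    linarith [hVolt2 s hs]
  -- star identity
  have hstar : ∀ u ∈ Icc (0:ℝ) T,
      Q u + L u = - ∫ t in (0:ℝ)..u, L (u - t) * q₁ t := by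
    intro u hu
    have h1 : Q u + L u = ∫ s in (0:ℝ)..u, (q₁ s + l₁ s) := by
      rw [integral_add hq₁int.intervalIntegrable hl₁int.intervalIntegrable]
    have h2 : (∫ s in (0:ℝ)..u, (q₁ s + l₁ s))
        = ∫ s in (0:ℝ)..u, (- ∫ t in (0:ℝ)..s, l₁ (s - t) * q₁ t) := by
      refine integral_congr (fun s hs => ?_)
      rw [uIcc_of_le hu.1] at hs
      exact hql s ⟨hs.1, hs.2.trans hu.2⟩
    have h3 := tri_swap u hu.1 (fun s t => l₁ (s - t) * q₁ t)
      ((hl₁m.comp (measurable_fst.sub measurable_snd)).mul (hq₁m.comp measurable_snd))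
      (|Ml| * |Mq|) (fun s t => hmul _ _ _ _ (hl₁bd _) (hq₁bd _))
    have h4 : (∫ t in (0:ℝ)..u, ∫ s in t..u, l₁ (s - t) * q₁ t)
        = ∫ t in (0:ℝ)..u, L (u - t) * q₁ t := by
      refine integral_congr (fun t _ => ?_)
      rw [intervalIntegral.integral_mul_const, integral_comp_sub_right l₁ t, sub_self, hLdef]
    rw [h1, h2, intervalIntegral.integral_neg, h3, h4]
  -- main computation
  intro x hx
  have hx0 : 0 ≤ x := hx.1
  have hQeq : ∀ y ∈ Icc (0:ℝ) x, (∫ u in (0:ℝ)..y, q u) = Q y := by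
    intro y hy
    refine integral_congr (fun t ht => ?_)
    rw [uIcc_of_le hy.1] at ht
    have htT : t ∈ Icc (0:ℝ) T := ⟨ht.1, ht.2.trans (hy.2.trans hx.2)⟩
    exact (indicator_of_mem htT _).symm
  have hLeq : ∀ y ∈ Icc (0:ℝ) x, (∫ u in (0:ℝ)..y, l u) = L y := by
    intro y hy
    refine integral_congr (fun t ht => ?_)
    rw [uIcc_of_le hy.1] at ht
    have htT : t ∈ Icc (0:ℝ) T := ⟨ht.1, ht.2.trans (hy.2.trans hx.2)⟩
    exact (indicator_of_mem htT _).symm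
  have step1 : (∫ y in (0:ℝ)..x, k (x - y) * p y)
      = ∫ y in (0:ℝ)..x, (1 + L (x - y)) * (1 + Q y) := by
    refine integral_congr (fun y hy => ?_)
    rw [uIcc_of_le hx0] at hy
    have hyT : y ∈ Icc (0:ℝ) T := ⟨hy.1, hy.2.trans hx.2⟩
    have hxyT : x - y ∈ Icc (0:ℝ) T := ⟨by linarith [hy.2], by linarith [hx.2, hy.1]⟩
    rw [hk _ hxyT, hp _ hyT, hLeq (x - y) ⟨hxyT.1, by linarith [hy.1]⟩, hQeq y hy]
    field_simp
  have cL : Continuous fun y : ℝ => L (x - y) :=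
    hLcont.comp (continuous_const.sub continuous_id)
  have i1 : IntervalIntegrable (fun y : ℝ => L (x - y)) volume 0 x :=
    cL.intervalIntegrable 0 x
  have i2 : IntervalIntegrable Q volume 0 x := hQcont.intervalIntegrable 0 x
  have i3 : IntervalIntegrable (fun y : ℝ => L (x - y) * Q y) volume 0 x :=
    (cL.mul hQcont).intervalIntegrable 0 x
  have step2 : (∫ y in (0:ℝ)..x, (1 + L (x - y)) * (1 + Q y))
      = x + ((∫ y in (0:ℝ)..x, L (x - y)) + ((∫ y in (0:ℝ)..x, Q y)
        + ∫ y in (0:ℝ)..x, L (x - y) * Q y)) := by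
    have : (fun y => (1 + L (x - y)) * (1 + Q y))
        = fun y => 1 + (L (x - y) + (Q y + L (x - y) * Q y)) := by
      funext y; ring
    rw [this, integral_add (intervalIntegrable_const) (i1.add (i2.add i3)),
      integral_add i1 (i2.add i3), integral_add i2 i3]
    simp
  -- A = ∫ L
  have hA : (∫ y in (0:ℝ)..x, L (x - y)) = ∫ u in (0:ℝ)..x, L u := by
    rw [integral_comp_sub_left L x, sub_self, sub_zero]
  -- C via tri_swap
  have hC : (∫ y in (0:ℝ)..x, L (x - y) * Q y)
      = ∫ t in (0:ℝ)..x, (∫ u in (0:ℝ)..(x - t), L u) * q₁ t := by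
    have h1 : (∫ y in (0:ℝ)..x, L (x - y) * Q y)
        = ∫ y in (0:ℝ)..x, ∫ t in (0:ℝ)..y, L (x - y) * q₁ t := by
      refine integral_congr (fun y _ => ?_)
      rw [intervalIntegral.integral_const_mul]
    have h2 := tri_swap x hx0 (fun y t => L (x - y) * q₁ t)
      (((hLcont.measurable).comp (measurable_const.sub measurable_fst)).mul
        (hq₁m.comp measurable_snd))
      (CL * |Mq|) (fun y t => hmul _ _ _ _ (hLbd _) (hq₁bd _))
    rw [h1, h2]
    refine integral_congr (fun t _ => ?_)
    rw [intervalIntegral.integral_mul_const, integral_comp_sub_left L x, sub_self]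
  -- D via tri_swap
  have hD : (∫ u in (0:ℝ)..x, ∫ t in (0:ℝ)..u, L (u - t) * q₁ t)
      = ∫ t in (0:ℝ)..x, (∫ u in (0:ℝ)..(x - t), L u) * q₁ t := by
    have h2 := tri_swap x hx0 (fun u t => L (u - t) * q₁ t)
      (((hLcont.measurable).comp (measurable_fst.sub measurable_snd)).mul
        (hq₁m.comp measurable_snd))
      (CL * |Mq|) (fun y t => hmul _ _ _ _ (hLbd _) (hq₁bd _))
    rw [h2]
    refine integral_congr (fun t _ => ?_)
    rw [intervalIntegral.integral_mul_const, integral_comp_sub_right L t, sub_self]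
  -- A + B = -D
  have hAB : (∫ u in (0:ℝ)..x, L u) + (∫ y in (0:ℝ)..x, Q y)
      = - ∫ u in (0:ℝ)..x, ∫ t in (0:ℝ)..u, L (u - t) * q₁ t := by
    have hint : IntervalIntegrable L volume 0 x := hLcont.intervalIntegrable 0 x
    rw [← integral_add hint i2]
    have : (∫ u in (0:ℝ)..x, (L u + Q u))
        = ∫ u in (0:ℝ)..x, (- ∫ t in (0:ℝ)..u, L (u - t) * q₁ t) := by
      refine integral_congr (fun u hu => ?_)
      rw [uIcc_of_le hx0] at hu
      have := hstar u ⟨hu.1, hu.2.trans hx.2⟩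
      linarith [this]
    rw [this, intervalIntegral.integral_neg]
  rw [step1, step2, hA, hC]
  have : (∫ u in (0:ℝ)..x, L u) + ((∫ y in (0:ℝ)..x, Q y)
      + ∫ t in (0:ℝ)..x, (∫ u in (0:ℝ)..(x - t), L u) * q₁ t) = 0 := by
    rw [← hD]
    linarith [hAB]
  linarith [this]
end
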